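/- arXiv:2107.13540 — 4 statements merged into one kernel-verified Lean document; each statement's English description precedes it below -/
import Mathlib

section
/- Let τ ≥ 2 be a real number and α a real number. The formal power series (1 + α t)/(1 - τ t + t²) has all coefficients positive if and only if α ≥ -(τ + √(τ² - 4))/2. -/
/-!
Let `λ ≥ 1` be the larger root of `λ² - τλ + 1`, so that `τ = λ + 1/λ`. The coefficients satisfy
`g₀ = 1`, `g₁ = τ + α`, `g_{n+2} = τ g_{n+1} - gₙ`, which solves to
`λⁿ gₙ = 1 + λ (λ + α) (1 + λ² + ⋯ + λ^{2(n-1)})`. The geometric sum is nonnegative and at least `n`,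
so every coefficient is positive exactly when `λ + α ≥ 0`.
-/

open PowerSeries Finset

section Recurrence

variable {R : Type*} [CommRing R] {τ α : R} {g : R⟦X⟧}

theorem coeff_eq_of_mul_eq (hg : g * (1 - C τ * X + X ^ 2) = 1 + C α * X) (n : ℕ) :
    coeff n g - τ * coeff n (g * X) + coeff n (g * X ^ 2) = coeff n (1 + C α * X) := by
  rw [← hg]
  simp only [mul_add, mul_sub, mul_one, map_add, map_sub, mul_left_comm g (C τ), coeff_C_mul]

theorem coeff_zero_of_mul_eq (hg : g * (1 - C τ * X + X ^ 2) = 1 + C α * X) :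
    coeff 0 g = 1 := by
  simpa [coeff_mul_X_pow'] using coeff_eq_of_mul_eq hg 0

theorem coeff_one_of_mul_eq (hg : g * (1 - C τ * X + X ^ 2) = 1 + C α * X) :
    coeff 1 g = τ + α := by
  have h := coeff_eq_of_mul_eq hg 1
  simp only [coeff_succ_mul_X, coeff_zero_of_mul_eq hg, mul_one, coeff_mul_X_pow',
    Nat.not_ofNat_le_one, ↓reduceIte, add_zero, map_add, coeff_one, one_ne_zero, coeff_zero_C,
    zero_add] at h
  linear_combination h

theorem coeff_add_two_of_mul_eq (hg : g * (1 - C τ * X + X ^ 2) = 1 + C α * X) (n : ℕ) :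
    coeff (n + 2) g = τ * coeff (n + 1) g - coeff n g := by
  have h := coeff_eq_of_mul_eq hg (n + 2)
  rw [coeff_succ_mul_X, coeff_mul_X_pow] at h
  simp only [map_add, coeff_one, Nat.add_eq_zero_iff, OfNat.ofNat_ne_zero, and_false, ↓reduceIte,
    coeff_succ_mul_X, coeff_succ_C, add_zero] at h
  linear_combination h

theorem pow_mul_coeff_eq_of_mul_eq (hg : g * (1 - C τ * X + X ^ 2) = 1 + C α * X) {l : R}
    (hl : l ^ 2 - τ * l + 1 = 0) (n : ℕ) :
    l ^ n * coeff n g = 1 + l * (l + α) * ∑ k ∈ range n, (l ^ 2) ^ k := by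
  induction n using Nat.twoStepInduction with
  | zero => simp [coeff_zero_of_mul_eq hg]
  | one =>
    rw [coeff_one_of_mul_eq hg, sum_range_one, pow_zero]
    linear_combination -hl
  | more n ih₀ ih₁ =>
    rw [coeff_add_two_of_mul_eq hg, sum_range_succ, sum_range_succ]
    rw [sum_range_succ] at ih₁
    linear_combination (l ^ 2 + 1) * ih₁ - l ^ 2 * ih₀ - l ^ (n + 1) * coeff (n + 1) g * hl

end Recurrence

theorem forall_pos_one_add_mul_geom_sum_iff {r K : ℝ} (hr : 1 ≤ r) :
    (∀ n, 0 < 1 + K * ∑ k ∈ range n, r ^ k) ↔ 0 ≤ K := by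
  refine ⟨fun hpos => ?_, fun hK n => by positivity⟩
  by_contra! hK
  have hsum (n : ℕ) : (n : ℝ) ≤ ∑ k ∈ range n, r ^ k := by
    simpa using card_nsmul_le_sum (range n) (r ^ ·) 1 fun k _ => one_le_pow₀ hr
  obtain ⟨n, hn⟩ := exists_nat_gt (-1 / K)
  rw [div_lt_iff_of_neg hK] at hn
  nlinarith [hpos n, hsum n]

theorem one_le_half_add_sqrt {τ : ℝ} (hτ : 2 ≤ τ) : 1 ≤ (τ + √(τ ^ 2 - 4)) / 2 := by
  have := Real.sqrt_nonneg (τ ^ 2 - 4)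
  linarith

theorem half_add_sqrt_quadratic_eq_zero {τ : ℝ} (hτ : 2 ≤ τ) :
    ((τ + √(τ ^ 2 - 4)) / 2) ^ 2 - τ * ((τ + √(τ ^ 2 - 4)) / 2) + 1 = 0 := by
  have := Real.sq_sqrt (show 0 ≤ τ ^ 2 - 4 by nlinarith)
  linear_combination this / 4

/-- Let `τ ≥ 2` and `α` be real numbers.  The formal power series
`(1 + α t)/(1 - τ t + t²)` (encoded as the power series `g` satisfying
`g * (1 - τ t + t²) = 1 + α t`) has all coefficients strictly positive if and only if
`α ≥ -(τ + √(τ² - 4))/2`. -/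
theorem powerSeries_pos_coeffs_iff
    (τ α : ℝ) (hτ : 2 ≤ τ) (g : PowerSeries ℝ)
    (hg : g * (1 - PowerSeries.C τ * PowerSeries.X + PowerSeries.X ^ 2)
        = 1 + PowerSeries.C α * PowerSeries.X) :
    (∀ n : ℕ, 0 < PowerSeries.coeff n g) ↔
      -(τ + Real.sqrt (τ ^ 2 - 4)) / 2 ≤ α := by
  set l := (τ + √(τ ^ 2 - 4)) / 2 with hl_def
  have hl : 1 ≤ l := one_le_half_add_sqrt hτ
  have hcoeff (n : ℕ) : 0 < coeff n g ↔ 0 < 1 + l * (l + α) * ∑ k ∈ range n, (l ^ 2) ^ k := by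
    rw [← pow_mul_coeff_eq_of_mul_eq hg (half_add_sqrt_quadratic_eq_zero hτ),
      mul_pos_iff_of_pos_left (by positivity)]
  rw [forall_congr' hcoeff, forall_pos_one_add_mul_geom_sum_iff (one_le_pow₀ hl),
    mul_nonneg_iff_of_pos_left (by positivity), neg_div, ← hl_def, neg_le_iff_add_nonneg']
end

section
/- The formal power series 1/(1 - (D - 2)t + t²) over the rationals has all coefficients nonnegative if and only if D ≥ 4, where D is an integer. -/
/-!
Multiplying by `1 - a t + t²` with `a = D - 2` shows that the coefficients `c n` of the inverse
satisfy `c 0 = 1`, `c 1 = a` and `c (n + 2) = a c (n + 1) - c n`. For `a ≥ 2` the differences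
`c (n + 1) - c n` grow by `(a - 2) c (n + 1) ≥ 0`, so the sequence is nondecreasing from `1`.
An integer `a < 2` is at most `1`, and then one of `c 1 = a`, `c 2 = a² - 1`,
`c 3 = a (a² - 2)` is negative.
-/

namespace PowerSeries

variable {R : Type*} [CommRing R] {a : R} {g : R⟦X⟧}

lemma mul_one_sub_C_mul_X_add_X_sq (a : R) (g : R⟦X⟧) :
    g * (1 - C a * X + X ^ 2) = g - C a * (g * X) + g * X ^ 2 := by
  ring

lemma coeff_zero_eq_one_of_mul_one_sub_C_mul_X_add_X_sq_eq_one
    (hg : g * (1 - C a * X + X ^ 2) = 1) : coeff 0 g = 1 := by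
  simpa using congrArg (coeff 0) hg

lemma coeff_one_eq_of_mul_one_sub_C_mul_X_add_X_sq_eq_one
    (hg : g * (1 - C a * X + X ^ 2) = 1) : coeff 1 g = a := by
  have h := congrArg (coeff 1) hg
  rw [mul_one_sub_C_mul_X_add_X_sq] at h
  simp only [map_add, map_sub, coeff_C_mul, coeff_succ_mul_X, mul_one,
    coeff_zero_eq_one_of_mul_one_sub_C_mul_X_add_X_sq_eq_one hg, coeff_mul_X_pow',
    Nat.not_ofNat_le_one, ↓reduceIte, add_zero, coeff_one, one_ne_zero] at h
  linear_combination h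

lemma coeff_add_two_eq_of_mul_one_sub_C_mul_X_add_X_sq_eq_one
    (hg : g * (1 - C a * X + X ^ 2) = 1) (n : ℕ) :
    coeff (n + 2) g = a * coeff (n + 1) g - coeff n g := by
  have h := congrArg (coeff (n + 2)) hg
  rw [mul_one_sub_C_mul_X_add_X_sq] at h
  simp only [map_add, map_sub, coeff_C_mul, coeff_succ_mul_X, coeff_mul_X_pow, coeff_one,
    Nat.add_eq_zero_iff, OfNat.ofNat_ne_zero, and_false, ↓reduceIte] at h
  linear_combination h

end PowerSeries

section Recurrence

variable {R : Type*} [CommRing R] [LinearOrder R] [IsStrictOrderedRing R]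
  {a : R} {c : ℕ → R}

lemma monotone_of_two_le_of_rec (ha : 2 ≤ a) (h0 : c 0 = 1) (h1 : c 1 = a)
    (hrec : ∀ n, c (n + 2) = a * c (n + 1) - c n) : Monotone c := by
  have hstep : ∀ n, 0 ≤ c n ∧ c n ≤ c (n + 1) := by
    intro n
    induction n with
    | zero => constructor <;> linarith
    | succ k ih =>
      obtain ⟨hk, hk_le⟩ := ih
      have hk1 : 0 ≤ c (k + 1) := hk.trans hk_le
      refine ⟨hk1, ?_⟩
      have : c (k + 2) - c (k + 1) = (a - 2) * c (k + 1) + (c (k + 1) - c k) := by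
        rw [hrec]; ring
      linarith [mul_nonneg (sub_nonneg.2 ha) hk1]
  exact monotone_nat_of_le_succ fun n => (hstep n).2

lemma exists_neg_of_le_one_of_rec (ha : a ≤ 1) (h0 : c 0 = 1) (h1 : c 1 = a)
    (hrec : ∀ n, c (n + 2) = a * c (n + 1) - c n) : ∃ n, c n < 0 := by
  have h2 : c 2 = a ^ 2 - 1 := by rw [hrec, h1, h0]; ring
  have h3 : c 3 = a * (a ^ 2 - 2) := by rw [hrec, h2, h1]; ring
  by_contra! hnonneg
  have ha0 : 0 ≤ a := h1 ▸ hnonneg 1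
  have ha_one : a = 1 := by nlinarith [hnonneg 2]
  have := hnonneg 3
  rw [h3, ha_one] at this
  norm_num at this

end Recurrence

/-- For an integer `D`, the formal power series `1/(1 - (D-2)t + t²)` over
`ℚ` (encoded as the power series `g` satisfying `g * (1 - (D-2) t + t²) = 1`) has all
coefficients nonnegative if and only if `D ≥ 4`. -/
theorem powerSeries_nonneg_coeffs_iff_four_le
    (D : ℤ) (g : PowerSeries ℚ)
    (hg : g * (1 - PowerSeries.C ((D : ℚ) - 2) * PowerSeries.X + PowerSeries.X ^ 2)
        = 1) :
    (∀ n : ℕ, 0 ≤ PowerSeries.coeff n g) ↔ 4 ≤ D := by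
  set a : ℚ := (D : ℚ) - 2
  have h0 := PowerSeries.coeff_zero_eq_one_of_mul_one_sub_C_mul_X_add_X_sq_eq_one hg
  have h1 := PowerSeries.coeff_one_eq_of_mul_one_sub_C_mul_X_add_X_sq_eq_one hg
  have hrec := PowerSeries.coeff_add_two_eq_of_mul_one_sub_C_mul_X_add_X_sq_eq_one hg
  constructor
  · intro hnonneg
    by_contra! hD
    have ha : a ≤ 1 := by
      have : (D : ℚ) ≤ 3 := by exact_mod_cast Int.lt_add_one_iff.1 hD
      linarith
    obtain ⟨n, hn⟩ :=
      exists_neg_of_le_one_of_rec (c := fun n => PowerSeries.coeff n g) ha h0 h1 hrec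
    exact (hnonneg n).not_gt hn
  · intro hD n
    have ha : 2 ≤ a := by
      have : (4 : ℚ) ≤ D := by exact_mod_cast hD
      linarith
    have := monotone_of_two_le_of_rec (c := fun n => PowerSeries.coeff n g) ha h0 h1 hrec
      (Nat.zero_le n)
    linarith
end

section
/- With A⁺ a flat k[t]-algebra as above, if a₁ and a₂ are both m-central elements with a₁ ≡ a₂ (mod t), then D_{a₁,m} - D_{a₂,m} = D_{t⁻¹(a₁-a₂), m-1}; in particular if every (m-1)-central element extended from the center of A⁺/tA⁺ admits an m-central lift, then the obstruction class of an m-central element in Der(B)/Inn(B) depends only on its reduction mod t. -/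
/-- With `A⁺` a flat `k[t]`-algebra as in Statement 14 (ring with a
central regular element `t`), let `a₁`, `a₂` be `m`-central elements with
`a₁ ≡ a₂ (mod t)`, say `a₁ - a₂ = t·c`, and let `D₁ = D_{a₁,m}`, `D₂ = D_{a₂,m}` and
`E = D_{c,m-1}` be the associated derivations (encoded by the division identities).
Then `D₁ - D₂ = D_{t⁻¹(a₁-a₂),m-1} = E`; in particular, if every `(m-1)`-central
element admits an `m`-central lift (`hlift`), then `D₁ - D₂` is inner modulo `t`, i.e.
the obstruction class in `Der(B)/Inn(B)` (`B = A⁺/tA⁺`) depends only on the reduction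
mod `t`. -/
theorem obstruction_well_defined
    {A : Type*} [Ring A] (t : A)
    (htc : ∀ x : A, t * x = x * t)
    (hreg : ∀ x : A, t * x = 0 → x = 0)
    (m : ℕ) (hm : 1 ≤ m) (a₁ a₂ c : A)
    (hc : a₁ - a₂ = t * c)
    (D₁ D₂ E : A → A)
    (hD₁ : ∀ x : A, t ^ m * D₁ x = a₁ * x - x * a₁)
    (hD₂ : ∀ x : A, t ^ m * D₂ x = a₂ * x - x * a₂)
    (hE : ∀ x : A, t ^ (m - 1) * E x = c * x - x * c)
    (hlift : ∀ c' : A, (∀ x : A, ∃ y : A, c' * x - x * c' = t ^ (m - 1) * y) →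
      ∃ c'' : A, ∀ x : A, ∃ y : A,
        (c' + t ^ (m - 1) * c'') * x - x * (c' + t ^ (m - 1) * c'') = t ^ m * y) :
    (∀ x : A, D₁ x - D₂ x = E x) ∧
    (∃ b : A, ∀ x : A, ∃ y : A, (D₁ x - D₂ x) - (b * x - x * b) = t * y) := by
  have hmm : t ^ m = t * t ^ (m - 1) := by
    conv_lhs => rw [← Nat.succ_pred_eq_of_pos hm]
    rw [pow_succ']
    rfl
  have hpowreg : ∀ n (x : A), t ^ n * x = 0 → x = 0 := by
    intro n
    induction n with
    | zero => intro x h; simpa using h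
    | succ n ih =>
      intro x h
      rw [pow_succ', mul_assoc] at h
      exact ih _ (hreg _ h)
  have key : ∀ x, D₁ x - D₂ x = E x := by
    intro x
    have h : t ^ m * (D₁ x - D₂ x - E x) = 0 := by
      have h1 : t ^ m * (D₁ x - D₂ x) = (a₁ - a₂) * x - x * (a₁ - a₂) := by
        rw [mul_sub, hD₁, hD₂]; noncomm_ring
      have h2 : t ^ m * E x = (a₁ - a₂) * x - x * (a₁ - a₂) := by
        rw [hmm, mul_assoc, hE, hc, mul_sub]
        rw [← mul_assoc]
        congr 1
        rw [← mul_assoc, htc x, mul_assoc]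
      rw [mul_sub, h1, h2, sub_self]
    exact sub_eq_zero.mp (hpowreg m _ h)
  refine ⟨key, ?_⟩
  obtain ⟨c'', hc''⟩ := hlift c (fun x => ⟨E x, (hE x).symm⟩)
  refine ⟨-c'', fun x => ?_⟩
  obtain ⟨y, hy⟩ := hc'' x
  refine ⟨y, ?_⟩
  have hcomm : ∀ z : A, t ^ (m - 1) * z = z * t ^ (m - 1) := fun z =>
    ((show Commute t z from htc z).pow_left (m - 1)).eq
  have hty : t ^ (m - 1) * (t * y) = t * (t ^ (m - 1) * y) := by
    rw [← mul_assoc, ← htc (t ^ (m - 1)), mul_assoc]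
  have hx : x * (t ^ (m - 1) * c'') = t ^ (m - 1) * (x * c'') := by
    rw [← mul_assoc, ← hcomm x, mul_assoc]
  have key2 : t ^ (m - 1) * (E x + (c'' * x - x * c'')) = t * (t ^ (m - 1) * y) := by
    rw [hmm, mul_assoc] at hy
    rw [mul_add, hE, mul_sub, ← hx, ← mul_assoc, ← hy]
    noncomm_ring
  have h3 : t ^ (m - 1) * ((E x - (-c'' * x - x * -c'')) - t * y) = 0 := by
    have hr : (E x - (-c'' * x - x * -c'')) - t * y
        = (E x + (c'' * x - x * c'')) - t * y := by noncomm_ring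
    rw [hr, mul_sub, key2, hty, sub_self]
  have := hpowreg (m - 1) _ h3
  have h4 := sub_eq_zero.mp this
  rw [key x, h4]
end

section
/- Let Λ be the E₈ root lattice (positive definite, even) and let r ≥ 2 be an integer. If v ∈ Λ is a minimal representative of its coset in Λ/rΛ (i.e., v/r lies in the Voronoi cell around 0) and v² ≤ r², with v² ≡ r² - r + 2 (mod 2r) forced by χ ∈ Z and the requirement (r² - r + 2 - v²)/(2r) ≤ 0 for all coset representatives, then v² = r² - r + 2 and the Euler characteristic (r² - r + 2 - v²)/(2r) equals 0. -/
theorem minimal_coset_representative_euler_char_general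
    {L : Type*} [AddCommGroup L] [Module ℤ L]
    (B : L →ₗ[ℤ] L →ₗ[ℤ] ℤ)
    (r : ℤ) (hr : 2 ≤ r) (v : L)
    (hcell : B v v ≤ r ^ 2)
    (hint : (2 * r) ∣ (r ^ 2 - r + 2 - B v v))
    (hnonpos : ∀ w : L, r ^ 2 - r + 2 - B (v + r • w) (v + r • w) ≤ 0) :
    B v v = r ^ 2 - r + 2 ∧ (r ^ 2 - r + 2 - B v v) / (2 * r) = 0 := by
  have hnum_nonpos : r ^ 2 - r + 2 - B v v ≤ 0 := by simpa using hnonpos 0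
  have hnum_zero : r ^ 2 - r + 2 - B v v = 0 :=
    Int.eq_zero_of_abs_lt_dvd hint (by rw [abs_of_nonpos hnum_nonpos]; linarith)
  exact ⟨by linarith, by rw [hnum_zero, Int.zero_ediv]⟩

/-- Let `Λ` be the E₈ root lattice (a positive definite even lattice,
encoded by the symmetric bilinear form `B`) and `r ≥ 2`.  Suppose `v ∈ Λ` is a minimal
representative of its coset in `Λ/rΛ` (`v/r` lies in the Voronoi cell around `0`, i.e.
`v² ≤ (v - rλ)²` for all `λ ∈ Λ`) with `v² ≤ r²` (the maximum of `w²` over the Voronoi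
cell is `1`), suppose `2r ∣ r² - r + 2 - v²` (integrality of `χ`), and suppose
`(r² - r + 2 - w²)/(2r) ≤ 0` for all coset representatives `w = v + rλ`.  Then
`v² = r² - r + 2` and the Euler characteristic `(r² - r + 2 - v²)/(2r)` equals `0`. -/
theorem minimal_coset_representative_euler_char
    {L : Type*} [AddCommGroup L] [Module ℤ L]
    (B : L →ₗ[ℤ] L →ₗ[ℤ] ℤ) (hsymm : ∀ x y : L, B x y = B y x)
    (hpos : ∀ x : L, x ≠ 0 → 0 < B x x) (heven : ∀ x : L, 2 ∣ B x x)
    (r : ℤ) (hr : 2 ≤ r) (v : L)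
    (hVoronoi : ∀ w : L, B v v ≤ B (v - r • w) (v - r • w))
    (hcell : B v v ≤ r ^ 2)
    (hint : (2 * r) ∣ (r ^ 2 - r + 2 - B v v))
    (hnonpos : ∀ w : L, r ^ 2 - r + 2 - B (v + r • w) (v + r • w) ≤ 0) :
    B v v = r ^ 2 - r + 2 ∧ (r ^ 2 - r + 2 - B v v) / (2 * r) = 0 :=
  minimal_coset_representative_euler_char_general B r hr v hcell hint hnonpos
end
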